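/- Let T be an S_1-admissible tree and N ∈ ℕ. Then there exists an S_N-admissible tree T′ with the same root such that the leaves of T and T′ coincide, and for every leaf E, o_{T′}(E) = N·⌈o_T(E)/N⌉. -/

import Mathlib

/-- The Schreier families: `Schreier 0` consists of the singletons and `∅`;
`Schreier (n+1)` consists of all unions `G_0 ∪ … ∪ G_{k-1}` of nonempty members of
`Schreier n` with `G_0 < G_1 < … < G_{k-1}` and `k ≤ min G_0`. -/
def Schreier : ℕ → Set (Finset ℕ)
  | 0 => {F | F.card ≤ 1}
  | n + 1 => {F | ∃ (k : ℕ) (G : ℕ → Finset ℕ),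
      F = (Finset.range k).biUnion G ∧
      (∀ i < k, G i ∈ Schreier n) ∧
      (∀ i < k, (G i).Nonempty) ∧
      (∀ i j, i < j → j < k → ∀ a ∈ G i, ∀ b ∈ G j, a < b) ∧
      (∀ a ∈ G 0, k ≤ a)}

/-- The minimum of a finite set of naturals (`0` for the empty set). -/
def minN (E : Finset ℕ) : ℕ := E.min.untopD 0

/-- Norming trees: a leaf carries a finite set; an internal node carries a finite
set, the Schreier index `n` used for its immediate successors, and the list of
subtrees rooted at those successors. -/
inductive NTree : Type
  | leaf : Finset ℕ → NTree
  | node : Finset ℕ → ℕ → List NTree → NTree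

/-- The set at the root of a norming tree. -/
def NTree.root : NTree → Finset ℕ
  | .leaf E => E
  | .node E _ _ => E

/-- A finite list of sets is `S_n`-admissible: the sets are successive
(`E < F` for earlier `E`, later `F`) and the set of their minima lies in `S_n`. -/
def AdmissibleSets (n : ℕ) (l : List (Finset ℕ)) : Prop :=
  l.Pairwise (fun E F => ∀ a ∈ E, ∀ b ∈ F, a < b) ∧
    (l.map minN).toFinset ∈ Schreier n

/-- A finite list of sets is `S_n`-allowable: the sets are pairwise disjoint and
the set of their minima lies in `S_n`. -/
def AllowableSets (n : ℕ) (l : List (Finset ℕ)) : Prop :=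
  l.Pairwise (fun E F => Disjoint E F) ∧
    (l.map minN).toFinset ∈ Schreier n

/-- `(S_n)_{n≥1}`-admissible trees: every node set is nonempty, children are
contained in their parent, and the immediate successors of each internal node
form an `S_n`-admissible collection, `n ≥ 1` being the index recorded at the node. -/
inductive ValidAdm : NTree → Prop
  | leaf (E : Finset ℕ) (hE : E.Nonempty) : ValidAdm (.leaf E)
  | node (E : Finset ℕ) (n : ℕ) (cs : List NTree) (hE : E.Nonempty) (hn : 1 ≤ n)
      (hne : cs ≠ [])
      (hsub : ∀ c ∈ cs, NTree.root c ⊆ E)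
      (hadm : AdmissibleSets n (cs.map NTree.root))
      (hval : ∀ c ∈ cs, ValidAdm c) : ValidAdm (.node E n cs)

/-- `(S_n)_{n≥1}`-allowable trees (for the modified mixed Tsirelson norm). -/
inductive ValidAllow : NTree → Prop
  | leaf (E : Finset ℕ) (hE : E.Nonempty) : ValidAllow (.leaf E)
  | node (E : Finset ℕ) (n : ℕ) (cs : List NTree) (hE : E.Nonempty) (hn : 1 ≤ n)
      (hne : cs ≠ [])
      (hsub : ∀ c ∈ cs, NTree.root c ⊆ E)
      (hadm : AllowableSets n (cs.map NTree.root))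
      (hval : ∀ c ∈ cs, ValidAllow c) : ValidAllow (.node E n cs)

/-- `S_N`-admissible trees: every branching uses the fixed Schreier index `N`. -/
inductive ValidAdmN (N : ℕ) : NTree → Prop
  | leaf (E : Finset ℕ) (hE : E.Nonempty) : ValidAdmN N (.leaf E)
  | node (E : Finset ℕ) (cs : List NTree) (hE : E.Nonempty)
      (hne : cs ≠ [])
      (hsub : ∀ c ∈ cs, NTree.root c ⊆ E)
      (hadm : AdmissibleSets N (cs.map NTree.root))
      (hval : ∀ c ∈ cs, ValidAdmN N c) : ValidAdmN N (.node E N cs)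

/-- `IsNodeAt T d F`: `F` is a node of the tree `T` whose order `o(F)`—the sum of
the Schreier indices along the branch from the root to `F`—equals `d`. -/
inductive IsNodeAt : NTree → ℕ → Finset ℕ → Prop
  | root (T : NTree) : IsNodeAt T 0 T.root
  | child (E : Finset ℕ) (n : ℕ) (cs : List NTree) (c : NTree) (d : ℕ) (F : Finset ℕ)
      (hc : c ∈ cs) (h : IsNodeAt c d F) : IsNodeAt (.node E n cs) (n + d) F

/-- `IsLeafAt T d F`: `F` is a leaf of the tree `T` of order `o(F) = d`. -/
inductive IsLeafAt : NTree → ℕ → Finset ℕ → Prop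
  | leaf (E : Finset ℕ) : IsLeafAt (.leaf E) 0 E
  | child (E : Finset ℕ) (n : ℕ) (cs : List NTree) (c : NTree) (d : ℕ) (F : Finset ℕ)
      (hc : c ∈ cs) (h : IsLeafAt c d F) : IsLeafAt (.node E n cs) (n + d) F

/-!
The successors of each node are replaced by its descendants `N` levels further down (a leaf met
earlier stands in for itself), and the construction recurses into them. Since
`S_m[S_1] ⊆ S_{m+1}`, the descendants `j` levels below an `S_1`-admissible family form an
`S_{1+j}`-admissible family, so the new successors are `S_N`-admissible; a leaf of height `d`
is reached after `⌈d/N⌉` jumps, each of order `N`.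
-/

lemma minN_eq_min' {E : Finset ℕ} (h : E.Nonempty) : minN E = E.min' h := by
  rw [minN, ← Finset.coe_min' h, WithTop.untopD_coe]

lemma minN_mem {E : Finset ℕ} (h : E.Nonempty) : minN E ∈ E :=
  minN_eq_min' h ▸ E.min'_mem h

lemma minN_le {E : Finset ℕ} {a : ℕ} (ha : a ∈ E) : minN E ≤ a :=
  minN_eq_min' ⟨a, ha⟩ ▸ E.min'_le a ha

lemma Schreier.empty_mem (n : ℕ) : (∅ : Finset ℕ) ∈ Schreier n := by
  cases n with
  | zero => simp [Schreier]
  | succ n => exact ⟨0, fun _ => ∅, by simp, by simp, by simp, by simp, by simp⟩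

lemma Schreier.singleton_mem {a : ℕ} (ha : 1 ≤ a) (n : ℕ) : ({a} : Finset ℕ) ∈ Schreier n := by
  induction n with
  | zero => simp [Schreier]
  | succ n ih =>
    refine ⟨1, fun _ => {a}, by simp, fun _ _ => ih, fun _ _ => ⟨a, by simp⟩, ?_, ?_⟩
    · intro i j hij hj; omega
    · simpa using ha

lemma Schreier.one_le_of_mem {n : ℕ} (hn : 1 ≤ n) {F : Finset ℕ} (hF : F ∈ Schreier n)
    {a : ℕ} (ha : a ∈ F) : 1 ≤ a := by
  obtain ⟨m, rfl⟩ : ∃ m, n = m + 1 := ⟨n - 1, by omega⟩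
  obtain ⟨k, G, rfl, -, hne, hsucc, hmin⟩ := hF
  obtain ⟨i, hi, hai⟩ := Finset.mem_biUnion.mp ha
  rw [Finset.mem_range] at hi
  obtain ⟨b, hb⟩ := hne 0 (by omega)
  rcases Nat.eq_zero_or_pos i with rfl | hi0
  · have := hmin a hai; omega
  · have := hmin b hb
    have := hsucc 0 i hi0 hi b hb a hai
    omega

/-- `S_m[S_n] ⊆ S_{m+n}`. -/
lemma Schreier.biUnion_mem {m n : ℕ} {M : Finset ℕ} {P : ℕ → Finset ℕ} (hM : M ∈ Schreier m)
    (hP : ∀ a ∈ M, P a ∈ Schreier n) (hPne : ∀ a ∈ M, (P a).Nonempty)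
    (hle : ∀ a ∈ M, ∀ b ∈ P a, a ≤ b)
    (hlt : ∀ a ∈ M, ∀ b ∈ M, a < b → ∀ x ∈ P a, ∀ y ∈ P b, x < y) :
    M.biUnion P ∈ Schreier (m + n) := by
  induction m generalizing M with
  | zero =>
    obtain ⟨a, ha⟩ := Finset.card_le_one_iff_subset_singleton.mp hM
    rcases Finset.subset_singleton_iff.mp ha with rfl | rfl
    · simpa using Schreier.empty_mem n
    · simpa using hP a (by simp)
  | succ m ih =>
    obtain ⟨k, G, rfl, hG, hGne, hGsucc, hGmin⟩ := hM
    have hmem : ∀ i < k, G i ⊆ (Finset.range k).biUnion G := fun i hi =>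
      Finset.subset_biUnion_of_mem G (Finset.mem_range.mpr hi)
    rw [show m + 1 + n = m + n + 1 by omega]
    refine ⟨k, fun i => (G i).biUnion P, Finset.biUnion_biUnion _ _ _, ?_, ?_, ?_, ?_⟩
    · intro i hi
      exact ih (hG i hi) (fun a ha => hP a (hmem i hi ha)) (fun a ha => hPne a (hmem i hi ha))
        (fun a ha => hle a (hmem i hi ha))
        (fun a ha b hb => hlt a (hmem i hi ha) b (hmem i hi hb))
    · intro i hi
      obtain ⟨a, ha⟩ := hGne i hi
      exact Finset.biUnion_nonempty.mpr ⟨a, ha, hPne a (hmem i hi ha)⟩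
    · intro i j hij hj x hx y hy
      obtain ⟨a, ha, hxa⟩ := Finset.mem_biUnion.mp hx
      obtain ⟨b, hb, hyb⟩ := Finset.mem_biUnion.mp hy
      exact hlt a (hmem i (hij.trans hj) ha) b (hmem j hj hb)
        (hGsucc i j hij hj a ha b hb) x hxa y hyb
    · intro x hx
      obtain ⟨a, ha, hxa⟩ := Finset.mem_biUnion.mp hx
      rcases Nat.eq_zero_or_pos k with rfl | hk
      · exact Nat.zero_le x
      exact (hGmin a ha).trans (hle a (hmem 0 hk ha) x hxa)

lemma List.exists_toFinset_flatMap_eq_biUnion {α β γ : Type*} [DecidableEq β] [DecidableEq γ]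
    {l : List α} {g : α → γ} (hg : ∀ a ∈ l, ∀ b ∈ l, g a = g b → a = b) (f : α → List β) :
    ∃ P : γ → Finset β, (∀ a ∈ l, P (g a) = (f a).toFinset) ∧
      (l.flatMap f).toFinset = (l.map g).toFinset.biUnion P := by
  refine ⟨fun x => ((l.filter fun a => g a = x).flatMap f).toFinset, fun a ha => ?_, ?_⟩ <;>
    ext y <;>
    simp only [Finset.mem_biUnion, List.mem_toFinset, List.mem_map, List.mem_flatMap,
      List.mem_filter, decide_eq_true_eq]
  · exact ⟨fun ⟨b, ⟨hb, hab⟩, hy⟩ => hg b hb a ha hab ▸ hy, fun hy => ⟨a, ⟨ha, rfl⟩, hy⟩⟩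
  · exact ⟨fun ⟨a, ha, hy⟩ => ⟨g a, ⟨a, ha, rfl⟩, a, ⟨ha, rfl⟩, hy⟩,
      fun ⟨_, _, a, ⟨ha, _⟩, hy⟩ => ⟨a, ha, hy⟩⟩

lemma List.Pairwise.lt_of_minN_lt {α : Type*} {l : List α} {r : α → Finset ℕ}
    (hl : l.Pairwise fun a b => ∀ x ∈ r a, ∀ y ∈ r b, x < y) (hne : ∀ a ∈ l, (r a).Nonempty)
    {a b : α} (ha : a ∈ l) (hb : b ∈ l) (hab : minN (r a) < minN (r b)) :
    ∀ x ∈ r a, ∀ y ∈ r b, x < y := by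
  refine List.Pairwise.forall_of_forall_of_flip
    (R := fun a b => minN (r a) < minN (r b) → ∀ x ∈ r a, ∀ y ∈ r b, x < y)
    (fun _ _ h => absurd h (lt_irrefl _)) (hl.imp fun h => fun _ => h) ?_ ha hb hab
  exact hl.imp_of_mem fun ha hb h h' =>
    absurd (h _ (minN_mem (hne _ ha)) _ (minN_mem (hne _ hb))) (lt_asymm h')

lemma AdmissibleSets.flatMap {α : Type*} {m n : ℕ} {l : List α} {r : α → Finset ℕ}
    {L : α → List (Finset ℕ)} (hl : AdmissibleSets m (l.map r))
    (hL : ∀ a ∈ l, AdmissibleSets n (L a)) (hLne : ∀ a ∈ l, L a ≠ [])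
    (hLsub : ∀ a ∈ l, ∀ F ∈ L a, F.Nonempty ∧ F ⊆ r a) :
    AdmissibleSets (m + n) (l.flatMap L) := by
  have hsucc : l.Pairwise fun a b => ∀ x ∈ r a, ∀ y ∈ r b, x < y := List.pairwise_map.mp hl.1
  have hrne : ∀ a ∈ l, (r a).Nonempty := fun a ha => by
    obtain ⟨F, hF⟩ := List.exists_mem_of_ne_nil _ (hLne a ha)
    exact (hLsub a ha F hF).1.mono (hLsub a ha F hF).2
  have hinj : ∀ a ∈ l, ∀ b ∈ l, minN (r a) = minN (r b) → a = b := by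
    refine fun _ ha _ hb =>
      List.inj_on_of_nodup_map (f := fun a => minN (r a)) (List.pairwise_map.mpr ?_) ha hb
    exact hsucc.imp_of_mem fun ha hb h =>
      (h _ (minN_mem (hrne _ ha)) _ (minN_mem (hrne _ hb))).ne
  obtain ⟨P, hP, hmins⟩ :=
    List.exists_toFinset_flatMap_eq_biUnion hinj fun a => (L a).map minN
  have hPsub : ∀ a ∈ l, ∀ y ∈ P (minN (r a)), y ∈ r a := by
    intro a ha y hy
    rw [hP a ha, List.mem_toFinset, List.mem_map] at hy
    obtain ⟨F, hF, rfl⟩ := hy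
    exact (hLsub a ha F hF).2 (minN_mem (hLsub a ha F hF).1)
  have hM : ∀ x ∈ (l.map fun a => minN (r a)).toFinset, ∃ a ∈ l, minN (r a) = x := by
    simp only [List.mem_toFinset, List.mem_map, imp_self, implies_true]
  refine ⟨List.pairwise_flatMap.mpr ⟨fun a ha => (hL a ha).1, ?_⟩, ?_⟩
  · exact hsucc.imp_of_mem fun ha hb h F hF G hG x hx y hy =>
      h x ((hLsub _ ha F hF).2 hx) y ((hLsub _ hb G hG).2 hy)
  rw [List.map_flatMap, hmins]
  refine Schreier.biUnion_mem (by simpa only [List.map_map, Function.comp_def] using hl.2)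
    ?_ ?_ ?_ ?_
  · intro x hx
    obtain ⟨a, ha, rfl⟩ := hM x hx
    exact hP a ha ▸ (hL a ha).2
  · intro x hx
    obtain ⟨a, ha, rfl⟩ := hM x hx
    obtain ⟨F, hF⟩ := List.exists_mem_of_ne_nil _ (hLne a ha)
    exact hP a ha ▸ ⟨minN F, List.mem_toFinset.mpr (List.mem_map_of_mem hF)⟩
  · intro x hx y hy
    obtain ⟨a, ha, rfl⟩ := hM x hx
    exact minN_le (hPsub a ha y hy)
  · intro x hx y hy hxy p hp q hq
    obtain ⟨a, ha, rfl⟩ := hM x hx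
    obtain ⟨b, hb, rfl⟩ := hM y hy
    exact hsucc.lt_of_minN_lt hrne ha hb hxy p (hPsub a ha p hp) q (hPsub b hb q hq)

lemma Nat.one_add_ceilDiv {N : ℕ} (hN : 0 < N) (d : ℕ) :
    (1 + d) ⌈/⌉ N = (d - (N - 1)) ⌈/⌉ N + 1 := by
  simp only [Nat.ceilDiv_eq_add_pred_div]
  rcases le_or_gt d (N - 1) with hd | hd
  · rw [Nat.div_eq_of_lt (by omega : d - (N - 1) + N - 1 < N), Nat.div_eq_of_lt_le] <;> omega
  · rw [show 1 + d + N - 1 = d + N by omega, show d - (N - 1) + N - 1 = d by omega,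
      Nat.add_div_right d hN]

namespace NTree

def expand : NTree → List NTree
  | leaf E => [leaf E]
  | node _ _ cs => cs

def front : ℕ → List NTree → List NTree
  | 0, l => l
  | j + 1, l => (front j l).flatMap expand

lemma sizeOf_le_of_mem_expand {t u : NTree} (hu : u ∈ t.expand) : sizeOf u ≤ sizeOf t := by
  cases t with
  | leaf E => rw [List.mem_singleton.mp hu]
  | node E n cs =>
    have := List.sizeOf_lt_of_mem (show u ∈ cs from hu)
    simp only [node.sizeOf_spec]
    omega

lemma exists_sizeOf_le_of_mem_front {j : ℕ} {l : List NTree} {u : NTree} (hu : u ∈ front j l) :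
    ∃ t ∈ l, sizeOf u ≤ sizeOf t := by
  induction j generalizing u with
  | zero => exact ⟨u, hu, le_rfl⟩
  | succ j ih =>
    obtain ⟨s, hs, hus⟩ := List.mem_flatMap.mp hu
    obtain ⟨t, ht, hst⟩ := ih hs
    exact ⟨t, ht, (sizeOf_le_of_mem_expand hus).trans hst⟩

def regroup (N : ℕ) : NTree → NTree
  | leaf E => leaf E
  | node E _ cs => node E N ((front (N - 1) cs).attach.map fun u => regroup N u.1)
termination_by t => sizeOf t
decreasing_by
  obtain ⟨c, hc, hle⟩ := exists_sizeOf_le_of_mem_front u.2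
  have := List.sizeOf_lt_of_mem hc
  simp only [node.sizeOf_spec]
  omega

lemma regroup_leaf (N : ℕ) (E : Finset ℕ) : regroup N (leaf E) = leaf E := by
  rw [regroup]

lemma regroup_node (N : ℕ) (E : Finset ℕ) (n : ℕ) (cs : List NTree) :
    regroup N (node E n cs) = node E N ((front (N - 1) cs).map (regroup N)) := by
  rw [regroup, List.attach_map_val]

lemma root_regroup (N : ℕ) (t : NTree) : (t.regroup N).root = t.root := by
  cases t <;> simp only [regroup, root]

end NTree

lemma ValidAdmN.root_nonempty {n : ℕ} {t : NTree} (ht : ValidAdmN n t) : t.root.Nonempty := by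
  cases ht <;> assumption

section Expand

variable {n : ℕ} {t : NTree}

lemma ValidAdmN.of_mem_expand (ht : ValidAdmN n t) {u : NTree} (hu : u ∈ t.expand) :
    ValidAdmN n u := by
  cases ht with
  | leaf E hE => rw [List.mem_singleton.mp hu]; exact .leaf E hE
  | node _ _ _ _ _ _ hval => exact hval u hu

lemma ValidAdmN.root_subset_of_mem_expand (ht : ValidAdmN n t) {u : NTree} (hu : u ∈ t.expand) :
    u.root ⊆ t.root := by
  cases ht with
  | leaf => rw [List.mem_singleton.mp hu]
  | node _ _ _ _ hsub _ _ => exact hsub u hu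

lemma ValidAdmN.expand_ne_nil (ht : ValidAdmN n t) : t.expand ≠ [] := by
  cases ht with
  | leaf => exact List.cons_ne_nil _ _
  | node _ _ _ hne _ _ _ => exact hne

lemma ValidAdmN.admissibleSets_expand (ht : ValidAdmN n t) (hmin : 1 ≤ minN t.root) :
    AdmissibleSets n (t.expand.map NTree.root) := by
  cases ht with
  | leaf E _ =>
    exact ⟨List.pairwise_singleton _ _, by simpa [NTree.expand] using Schreier.singleton_mem hmin n⟩
  | node _ _ _ _ _ hadm _ => exact hadm

lemma IsLeafAt.exists_mem_expand (ht : ValidAdmN n t) {d : ℕ} {E : Finset ℕ}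
    (h : IsLeafAt t d E) : ∃ u ∈ t.expand, IsLeafAt u (d - n) E := by
  cases h with
  | leaf E => exact ⟨.leaf E, List.mem_singleton_self _, by simpa using IsLeafAt.leaf E⟩
  | child _ _ _ c _ _ hc h =>
    cases ht
    exact ⟨c, hc, by simpa using h⟩

lemma IsLeafAt.exists_of_mem_expand {u : NTree} (hu : u ∈ t.expand) {d : ℕ} {E : Finset ℕ}
    (h : IsLeafAt u d E) : ∃ d', IsLeafAt t d' E := by
  cases t with
  | leaf E' => rw [List.mem_singleton.mp hu] at h; exact ⟨d, h⟩
  | node E' m cs => exact ⟨m + d, .child E' m cs u d E hu h⟩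

end Expand

section Front

variable {n : ℕ} {l : List NTree}

lemma ValidAdmN.of_mem_front (hl : ∀ t ∈ l, ValidAdmN n t) {j : ℕ} {u : NTree}
    (hu : u ∈ NTree.front j l) : ValidAdmN n u := by
  induction j generalizing u with
  | zero => exact hl u hu
  | succ j ih =>
    obtain ⟨s, hs, hus⟩ := List.mem_flatMap.mp hu
    exact (ih hs).of_mem_expand hus

lemma NTree.exists_root_subset_of_mem_front (hl : ∀ t ∈ l, ValidAdmN n t) {j : ℕ} {u : NTree}
    (hu : u ∈ NTree.front j l) : ∃ t ∈ l, u.root ⊆ t.root := by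
  induction j generalizing u with
  | zero => exact ⟨u, hu, subset_rfl⟩
  | succ j ih =>
    obtain ⟨s, hs, hus⟩ := List.mem_flatMap.mp hu
    obtain ⟨t, ht, hst⟩ := ih hs
    exact ⟨t, ht, ((ValidAdmN.of_mem_front hl hs).root_subset_of_mem_expand hus).trans hst⟩

lemma NTree.front_ne_nil (hl : ∀ t ∈ l, ValidAdmN n t) (hne : l ≠ []) (j : ℕ) :
    NTree.front j l ≠ [] := by
  induction j with
  | zero => exact hne
  | succ j ih =>
    obtain ⟨u, hu⟩ := List.exists_mem_of_ne_nil _ ih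
    obtain ⟨v, hv⟩ := List.exists_mem_of_ne_nil _ (ValidAdmN.of_mem_front hl hu).expand_ne_nil
    exact List.ne_nil_of_mem (List.mem_flatMap.mpr ⟨u, hu, hv⟩)

lemma NTree.admissibleSets_flatMap_expand (hl : ∀ t ∈ l, ValidAdmN n t) {m : ℕ} (hm : 1 ≤ m)
    (hadm : AdmissibleSets m (l.map NTree.root)) :
    AdmissibleSets (m + n) ((l.flatMap NTree.expand).map NTree.root) := by
  rw [List.map_flatMap]
  refine hadm.flatMap (fun t ht => (hl t ht).admissibleSets_expand ?_)
    (fun t ht => by simpa using (hl t ht).expand_ne_nil) ?_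
  · refine Schreier.one_le_of_mem hm hadm.2 ?_
    simpa using ⟨t, ht, rfl⟩
  · intro t ht F hF
    obtain ⟨u, hu, rfl⟩ := List.mem_map.mp hF
    exact ⟨((hl t ht).of_mem_expand hu).root_nonempty, (hl t ht).root_subset_of_mem_expand hu⟩

lemma NTree.admissibleSets_front (hl : ∀ t ∈ l, ValidAdmN n t) {m : ℕ} (hm : 1 ≤ m)
    (hadm : AdmissibleSets m (l.map NTree.root)) (j : ℕ) :
    AdmissibleSets (m + n * j) ((NTree.front j l).map NTree.root) := by
  induction j with
  | zero => exact hadm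
  | succ j ih =>
    rw [Nat.mul_succ, ← Nat.add_assoc]
    exact admissibleSets_flatMap_expand (fun _ => ValidAdmN.of_mem_front hl) (by omega) ih

lemma IsLeafAt.exists_mem_front (hl : ∀ t ∈ l, ValidAdmN n t) {t : NTree} (ht : t ∈ l)
    {d : ℕ} {E : Finset ℕ} (h : IsLeafAt t d E) (j : ℕ) :
    ∃ u ∈ NTree.front j l, IsLeafAt u (d - n * j) E := by
  induction j with
  | zero => exact ⟨t, ht, h⟩
  | succ j ih =>
    obtain ⟨u, hu, hu'⟩ := ih
    obtain ⟨v, hv, hv'⟩ := hu'.exists_mem_expand (ValidAdmN.of_mem_front hl hu)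
    refine ⟨v, List.mem_flatMap.mpr ⟨u, hu, hv⟩, ?_⟩
    rwa [Nat.mul_succ, ← Nat.sub_sub]

lemma IsLeafAt.exists_of_mem_front {j : ℕ} {u : NTree} (hu : u ∈ NTree.front j l) {d : ℕ}
    {E : Finset ℕ} (h : IsLeafAt u d E) : ∃ t ∈ l, ∃ d', IsLeafAt t d' E := by
  induction j generalizing u d with
  | zero => exact ⟨u, hu, d, h⟩
  | succ j ih =>
    obtain ⟨s, hs, hus⟩ := List.mem_flatMap.mp hu
    obtain ⟨d', h'⟩ := h.exists_of_mem_expand hus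
    exact ih hs h'

end Front

lemma NTree.map_root_map_regroup (N : ℕ) (l : List NTree) :
    (l.map (NTree.regroup N)).map NTree.root = l.map NTree.root := by
  simp only [List.map_map, Function.comp_def, NTree.root_regroup]

section Regroup

variable {N : ℕ} {t : NTree}

lemma ValidAdmN.regroup (hN : 1 ≤ N) (ht : ValidAdmN 1 t) : ValidAdmN N (t.regroup N) := by
  induction t using NTree.regroup.induct N with
  | case1 E => cases ht with | leaf _ hE => rw [NTree.regroup_leaf]; exact .leaf E hE
  | case2 E n cs ih =>
    cases ht with
    | node _ _ hE hne hsub hadm hval =>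
    rw [NTree.regroup_node]
    refine .node E _ hE ?_ ?_ ?_ ?_
    · simpa using NTree.front_ne_nil hval hne (N - 1)
    · intro c hc
      obtain ⟨u, hu, rfl⟩ := List.mem_map.mp hc
      obtain ⟨s, hs, hus⟩ := NTree.exists_root_subset_of_mem_front hval hu
      exact NTree.root_regroup N u ▸ hus.trans (hsub s hs)
    · rw [NTree.map_root_map_regroup]
      simpa [Nat.add_sub_cancel' hN] using NTree.admissibleSets_front hval le_rfl hadm (N - 1)
    · intro c hc
      obtain ⟨u, hu, rfl⟩ := List.mem_map.mp hc
      exact ih ⟨u, hu⟩ (ValidAdmN.of_mem_front hval hu)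

lemma IsLeafAt.regroup (hN : 1 ≤ N) (ht : ValidAdmN 1 t) {d : ℕ} {E : Finset ℕ}
    (h : IsLeafAt t d E) : IsLeafAt (t.regroup N) (N * (d ⌈/⌉ N)) E := by
  induction t using NTree.regroup.induct N generalizing d with
  | case1 E' =>
    cases h
    simpa [NTree.regroup_leaf, Nat.ceilDiv_eq_add_pred_div, Nat.div_eq_of_lt (by omega : N - 1 < N)]
      using IsLeafAt.leaf E
  | case2 _ _ _ ih =>
    cases ht with
    | node _ _ _ _ _ _ hval =>
    cases h with
    | child _ _ _ _ _ _ hc h₁ =>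
    obtain ⟨u, hu, hu'⟩ := h₁.exists_mem_front hval hc (N - 1)
    rw [one_mul] at hu'
    rw [NTree.regroup_node, Nat.one_add_ceilDiv (by omega), Nat.mul_succ, add_comm]
    exact .child _ _ _ _ _ _ (List.mem_map_of_mem hu) (ih ⟨u, hu⟩ (.of_mem_front hval hu) hu')

lemma IsLeafAt.exists_of_regroup {d : ℕ} {E : Finset ℕ} (h : IsLeafAt (t.regroup N) d E) :
    ∃ d', IsLeafAt t d' E := by
  induction t using NTree.regroup.induct N generalizing d with
  | case1 E' => exact ⟨d, NTree.regroup_leaf N E' ▸ h⟩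
  | case2 E' n cs ih =>
    rw [NTree.regroup_node] at h
    cases h with
    | child _ _ _ _ _ _ hc h₂ =>
    obtain ⟨u, hu, rfl⟩ := List.mem_map.mp hc
    obtain ⟨d₃, h₃⟩ := ih ⟨u, hu⟩ h₂
    obtain ⟨s, hs, d₄, h₄⟩ := h₃.exists_of_mem_front hu
    exact ⟨n + d₄, .child E' n cs s d₄ E hs h₄⟩

end Regroup

/-- Let `T` be an `S_1`-admissible tree and `N ∈ ℕ`.  Then there
is an `S_N`-admissible tree `T'` with the same root, the same set of leaves, and
with `o_{T'}(E) = N⌈o_T(E)/N⌉` for every leaf `E`. -/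
theorem stmt15 (T : NTree) (hT : ValidAdmN 1 T) (N : ℕ) (hN : 1 ≤ N) :
    ∃ T' : NTree, ValidAdmN N T' ∧ T'.root = T.root ∧
      (∀ E : Finset ℕ, (∃ d, IsLeafAt T d E) ↔ (∃ d, IsLeafAt T' d E)) ∧
      (∀ E d, IsLeafAt T d E → IsLeafAt T' (N * ((d + N - 1) / N)) E) :=
  ⟨T.regroup N, hT.regroup hN, NTree.root_regroup N T,
    fun _ => ⟨fun ⟨_, h⟩ => ⟨_, h.regroup hN hT⟩, fun ⟨_, h⟩ => h.exists_of_regroup⟩,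
    fun _ _ h => h.regroup hN hT⟩
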